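/- Relative entropy bound for the EPL state: with ρ(p,p_d) the phase-averaged EPL state and σ_SEP(p) = (p²/4)P_odd ⊗ P_odd + ((1−p)p/2)(|11⟩⟨11| ⊗ P_odd + P_odd ⊗ |11⟩⟨11|) + (1−p)²|11⟩⟨11| ⊗ |11⟩⟨11|, the quantum relative entropy satisfies S(ρ(p,p_d) ‖ σ_SEP(p)) = (p²/2)(1 − h(p_d)), where h is the binary entropy function. -/

import Mathlib

open Matrix Kronecker

noncomputable section

def ket (a b : Fin 2) : Fin 2 × Fin 2 → ℂ := fun i => if i = (a, b) then 1 else 0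

def proj (v : Fin 2 × Fin 2 → ℂ) : Matrix (Fin 2 × Fin 2) (Fin 2 × Fin 2) ℂ :=
  Matrix.vecMulVec v (star v)

/-- Projector onto the odd-parity two-qubit subspace. -/
def Podd : Matrix (Fin 2 × Fin 2) (Fin 2 × Fin 2) ℂ := proj (ket 0 1) + proj (ket 1 0)

/-- `|01⟩⟨10|`. -/
def ketbra0110 : Matrix (Fin 2 × Fin 2) (Fin 2 × Fin 2) ℂ :=
  Matrix.vecMulVec (ket 0 1) (star (ket 1 0))

/-- `|10⟩⟨01|`. -/
def ketbra1001 : Matrix (Fin 2 × Fin 2) (Fin 2 × Fin 2) ℂ :=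
  Matrix.vecMulVec (ket 1 0) (star (ket 0 1))

/-- The phase-averaged EPL state `ρ(p, p_d)`. -/
def eplRho (p pd : ℝ) :
    Matrix ((Fin 2 × Fin 2) × (Fin 2 × Fin 2)) ((Fin 2 × Fin 2) × (Fin 2 × Fin 2)) ℂ :=
  ((p ^ 2 / 4 : ℝ) : ℂ) •
      (Podd ⊗ₖ Podd + ((2 * pd - 1 : ℝ) : ℂ) •
        (ketbra0110 ⊗ₖ ketbra1001 + ketbra1001 ⊗ₖ ketbra0110))
    + (((1 - p) * p / 2 : ℝ) : ℂ) • (proj (ket 1 1) ⊗ₖ Podd + Podd ⊗ₖ proj (ket 1 1))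
    + (((1 - p) ^ 2 : ℝ) : ℂ) • (proj (ket 1 1) ⊗ₖ proj (ket 1 1))

/-- The separable reference state `σ_SEP(p)`. -/
def eplSigma (p : ℝ) :
    Matrix ((Fin 2 × Fin 2) × (Fin 2 × Fin 2)) ((Fin 2 × Fin 2) × (Fin 2 × Fin 2)) ℂ :=
  ((p ^ 2 / 4 : ℝ) : ℂ) • (Podd ⊗ₖ Podd)
    + (((1 - p) * p / 2 : ℝ) : ℂ) • (proj (ket 1 1) ⊗ₖ Podd + Podd ⊗ₖ proj (ket 1 1))
    + (((1 - p) ^ 2 : ℝ) : ℂ) • (proj (ket 1 1) ⊗ₖ proj (ket 1 1))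

/-- The binary entropy function (base-2 logarithm). -/
def binEnt (x : ℝ) : ℝ := -(x * Real.logb 2 x) - (1 - x) * Real.logb 2 (1 - x)

/-! Both states are real combinations of one complete family of orthogonal projections:
onto `|01,01⟩, |10,10⟩` (weight `p²/4`); onto each Bell-type vector `(|01,10⟩ ± |10,01⟩)/√2`
(weights `p²p_d/2`, `p²(1-p_d)/2` in `ρ`, and `p²/4` each in `σ`); onto the states with exactly
one `|11⟩` (weight `(1-p)p/2`); onto `|11,11⟩` (weight `(1-p)²`); and onto the complement
(weight `0`). On such a combination `∑ cᵢ eᵢ` the functional calculus acts as `f ↦ ∑ f(cᵢ) eᵢ`,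
since `f` agrees on the finite spectrum with an interpolating polynomial. The relative entropy
thus becomes a classical sum, to which only the two Bell-type projections contribute: `p²/2`
times the divergence of `(p_d, 1-p_d)` from `(1/2, 1/2)`, that is `(p²/2)(1 - h(p_d))`. -/

namespace CompleteOrthogonalIdempotents

section Algebra

open Polynomial

variable {R A ι : Type*} [Fintype ι] [DecidableEq ι] {e : ι → A}

def sumSMulAlgHom [CommSemiring R] [Semiring A] [Algebra R A]
    (he : CompleteOrthogonalIdempotents e) : (ι → R) →ₐ[R] A where
  toFun g := ∑ i, g i • e i
  map_one' := by simpa using he.complete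
  map_mul' f g := by
    simp only [Pi.mul_apply, Finset.sum_mul, Finset.mul_sum, smul_mul_smul_comm, he.mul_eq]
    simp
  map_zero' := by simp
  map_add' f g := by simp [add_smul, Finset.sum_add_distrib]
  commutes' r := by simp [← Finset.smul_sum, he.complete, Algebra.algebraMap_eq_smul_one]

lemma sumSMulAlgHom_apply [CommSemiring R] [Semiring A] [Algebra R A]
    (he : CompleteOrthogonalIdempotents e) (g : ι → R) :
    he.sumSMulAlgHom g = ∑ i, g i • e i := rfl

lemma spectrum_sumSMulAlgHom_subset [Field R] [Ring A] [Algebra R A]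
    (he : CompleteOrthogonalIdempotents e) (c : ι → R) :
    spectrum R (he.sumSMulAlgHom c) ⊆ Set.range c := by
  refine (AlgHom.spectrum_apply_subset _ c).trans ?_
  rw [Pi.spectrum_eq, Set.iUnion_subset_iff]
  intro i
  rw [← Algebra.algebraMap_self_apply (c i), spectrum.scalar_eq]
  exact Set.singleton_subset_iff.mpr (Set.mem_range_self i)

lemma aeval_sumSMulAlgHom [CommSemiring R] [Semiring A] [Algebra R A]
    (he : CompleteOrthogonalIdempotents e) (c : ι → R) (q : R[X]) :
    aeval (he.sumSMulAlgHom c) q = he.sumSMulAlgHom (fun i ↦ q.eval (c i)) := by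
  rw [aeval_algHom_apply, aeval_pi_apply]
  simp

lemma cfc_sumSMulAlgHom [Ring A] [StarRing A] [Algebra ℝ A] [TopologicalSpace A]
    [ContinuousFunctionalCalculus ℝ A IsSelfAdjoint]
    (he : CompleteOrthogonalIdempotents e) (c : ι → ℝ) (f : ℝ → ℝ)
    (hc : IsSelfAdjoint (he.sumSMulAlgHom c)) :
    cfc f (he.sumSMulAlgHom c) = he.sumSMulAlgHom (f ∘ c) := by
  set q := Lagrange.interpolate (Finset.univ.image c) id f
  have hq (i : ι) : q.eval (c i) = f (c i) :=
    Lagrange.eval_interpolate_at_node f (Set.injOn_id _)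
      (Finset.mem_image_of_mem c (Finset.mem_univ i))
  calc cfc f (he.sumSMulAlgHom c)
      = cfc q.eval (he.sumSMulAlgHom c) := cfc_congr fun x hx ↦ by
        obtain ⟨i, rfl⟩ := he.spectrum_sumSMulAlgHom_subset c hx
        exact (hq i).symm
    _ = aeval (he.sumSMulAlgHom c) q := cfc_polynomial q _
    _ = he.sumSMulAlgHom (f ∘ c) := by
        rw [aeval_sumSMulAlgHom]
        exact congrArg _ (funext hq)

end Algebra

section Matrix

variable {ι n : Type*} [Fintype ι] [DecidableEq ι] [Fintype n] [DecidableEq n]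

lemma trace_sumSMulAlgHom {R α : Type*} [CommSemiring R] [Semiring α] [Algebra R α]
    {e : ι → Matrix n n α} (he : CompleteOrthogonalIdempotents e) (g : ι → R) :
    (he.sumSMulAlgHom g).trace = ∑ i, g i • (e i).trace := by
  simp [sumSMulAlgHom_apply, trace_sum, trace_smul]

lemma trace_mul_cfc_sub_trace_mul_cfc {𝕜 : Type*} [RCLike 𝕜] {e : ι → Matrix n n 𝕜}
    (he : CompleteOrthogonalIdempotents e) (a b : ι → ℝ) (f : ℝ → ℝ)
    (ha : IsSelfAdjoint (he.sumSMulAlgHom a)) (hb : IsSelfAdjoint (he.sumSMulAlgHom b)) :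
    (he.sumSMulAlgHom a * cfc f (he.sumSMulAlgHom a)).trace
        - (he.sumSMulAlgHom a * cfc f (he.sumSMulAlgHom b)).trace
      = ∑ i, (a i * (f (a i) - f (b i))) • (e i).trace := by
  rw [he.cfc_sumSMulAlgHom a f ha, he.cfc_sumSMulAlgHom b f hb, ← map_mul, ← map_mul,
    ← trace_sub, ← map_sub, trace_sumSMulAlgHom]
  simp [mul_sub]

end Matrix

end CompleteOrthogonalIdempotents

lemma mul_logb_mul_left {b a : ℝ} (ha : a ≠ 0) (x : ℝ) :
    x * Real.logb b (a * x) = x * Real.logb b a + x * Real.logb b x := by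
  rcases eq_or_ne x 0 with rfl | hx
  · simp
  · rw [Real.logb_mul ha hx, mul_add]

lemma mul_one_sub_binEnt_eq (a x : ℝ) :
    a * (1 - binEnt x) = a * x * (Real.logb 2 (a * x) - Real.logb 2 (a / 2))
        + a * (1 - x) * (Real.logb 2 (a * (1 - x)) - Real.logb 2 (a / 2)) := by
  rcases eq_or_ne a 0 with rfl | ha
  · simp
  have hhalf : Real.logb 2 (a / 2) = Real.logb 2 a - 1 := by
    rw [Real.logb_div ha two_ne_zero, Real.logb_self_eq_one one_lt_two]
  rw [hhalf, binEnt]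
  linear_combination -a * mul_logb_mul_left (b := 2) ha x
    - a * mul_logb_mul_left (b := 2) ha (1 - x)

lemma ket_eq_single (a b : Fin 2) : ket a b = Pi.single (a, b) 1 := by
  funext i
  simp [ket, Pi.single_apply]

lemma vecMulVec_single_star_single {n α : Type*} [DecidableEq n] [Semiring α] [StarRing α]
    (x y : n) : vecMulVec (Pi.single x (1 : α)) (star (Pi.single y 1)) = single x y 1 := by
  rw [single_eq_single_vecMulVec_single, ← Pi.single_star, star_one]

lemma proj_ket (a b : Fin 2) : proj (ket a b) = single (a, b) (a, b) 1 := by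
  rw [proj, ket_eq_single, vecMulVec_single_star_single]

lemma ketbra0110_eq : ketbra0110 = single (0, 1) (1, 0) 1 := by
  rw [ketbra0110, ket_eq_single, ket_eq_single, vecMulVec_single_star_single]

lemma ketbra1001_eq : ketbra1001 = single (1, 0) (0, 1) 1 := by
  rw [ketbra1001, ket_eq_single, ket_eq_single, vecMulVec_single_star_single]

def eplProj :
    Fin 5 → Matrix ((Fin 2 × Fin 2) × (Fin 2 × Fin 2)) ((Fin 2 × Fin 2) × (Fin 2 × Fin 2)) ℂ :=
  ![proj (ket 0 1) ⊗ₖ proj (ket 0 1) + proj (ket 1 0) ⊗ₖ proj (ket 1 0),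
    (1 / 2 : ℂ) • (proj (ket 0 1) ⊗ₖ proj (ket 1 0) + proj (ket 1 0) ⊗ₖ proj (ket 0 1)
      + (ketbra0110 ⊗ₖ ketbra1001 + ketbra1001 ⊗ₖ ketbra0110)),
    (1 / 2 : ℂ) • (proj (ket 0 1) ⊗ₖ proj (ket 1 0) + proj (ket 1 0) ⊗ₖ proj (ket 0 1)
      - (ketbra0110 ⊗ₖ ketbra1001 + ketbra1001 ⊗ₖ ketbra0110)),
    proj (ket 1 1) ⊗ₖ Podd + Podd ⊗ₖ proj (ket 1 1),
    proj (ket 1 1) ⊗ₖ proj (ket 1 1)]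

lemma orthogonalIdempotents_eplProj : OrthogonalIdempotents eplProj := by
  rw [OrthogonalIdempotents.iff_mul_eq]
  intro i j
  fin_cases i <;> fin_cases j <;>
    simp only [eplProj, Podd, proj_ket, ketbra0110_eq, ketbra1001_eq, add_kronecker,
      kronecker_add, single_kronecker_single, mul_one, Matrix.cons_val, Matrix.mul_add,
      Matrix.add_mul, Matrix.mul_sub, Matrix.sub_mul, Matrix.smul_mul, Matrix.mul_smul,
      single_mul_single_same, single_mul_single_of_ne, ne_eq, Prod.mk.injEq, Fin.reduceEq,
      false_and, and_false, not_false_eq_true, reduceIte, Fin.zero_eta, Fin.mk_one,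
      Fin.reduceFinMk] <;>
    module

lemma trace_eplProj_one : (eplProj 1).trace = 1 := by
  simp [eplProj, proj_ket, ketbra0110_eq, ketbra1001_eq, single_kronecker_single]
  norm_num

lemma trace_eplProj_two : (eplProj 2).trace = 1 := by
  simp [eplProj, proj_ket, ketbra0110_eq, ketbra1001_eq, single_kronecker_single]
  norm_num

/-- The index `none` stands for the complement `1 - ∑ i, eplProj i`. -/
def eplSpectral :
    (Option (Fin 5) → ℝ) →ₐ[ℝ]
      Matrix ((Fin 2 × Fin 2) × (Fin 2 × Fin 2)) ((Fin 2 × Fin 2) × (Fin 2 × Fin 2)) ℂ :=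
  (CompleteOrthogonalIdempotents.option orthogonalIdempotents_eplProj).sumSMulAlgHom

lemma eplSpectral_apply (g : Fin 5 → ℝ) :
    eplSpectral (Option.elim · 0 g) = ∑ i, g i • eplProj i := by
  simp [eplSpectral, CompleteOrthogonalIdempotents.sumSMulAlgHom_apply, Fintype.sum_option]

def rhoEigenvalues (p pd : ℝ) : Fin 5 → ℝ :=
  ![p ^ 2 / 4, p ^ 2 / 2 * pd, p ^ 2 / 2 * (1 - pd), (1 - p) * p / 2, (1 - p) ^ 2]

def sigmaEigenvalues (p : ℝ) : Fin 5 → ℝ :=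
  ![p ^ 2 / 4, p ^ 2 / 4, p ^ 2 / 4, (1 - p) * p / 2, (1 - p) ^ 2]

lemma eplRho_eq (p pd : ℝ) :
    eplRho p pd = eplSpectral (Option.elim · 0 (rhoEigenvalues p pd)) := by
  simp only [eplSpectral_apply, Fin.sum_univ_five, rhoEigenvalues, eplProj, Matrix.cons_val,
    ← Complex.coe_smul, eplRho, Podd, add_kronecker, kronecker_add]
  push_cast
  module

lemma eplSigma_eq (p : ℝ) : eplSigma p = eplSpectral (Option.elim · 0 (sigmaEigenvalues p)) := by
  simp only [eplSpectral_apply, Fin.sum_univ_five, sigmaEigenvalues, eplProj, Matrix.cons_val,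
    ← Complex.coe_smul, eplSigma, Podd, add_kronecker, kronecker_add]
  push_cast
  module

theorem epl_relative_entropy_general (p pd : ℝ)
    (hρ : (eplRho p pd).IsHermitian) (hσ : (eplSigma p).IsHermitian) :
    ((eplRho p pd * hρ.cfc (Real.logb 2)).trace
        - (eplRho p pd * hσ.cfc (Real.logb 2)).trace).re
      = p ^ 2 / 2 * (1 - binEnt pd) := by
  rw [← hρ.cfc_eq, ← hσ.cfc_eq, eplRho_eq, eplSigma_eq, eplSpectral,
    CompleteOrthogonalIdempotents.trace_mul_cfc_sub_trace_mul_cfc]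
  · simp only [Fintype.sum_option, Option.elim_none, Option.elim_some, Fin.sum_univ_five,
      rhoEigenvalues, sigmaEigenvalues, Matrix.cons_val, sub_self, mul_zero, zero_mul,
      trace_eplProj_one, trace_eplProj_two, Complex.real_smul, Complex.ofReal_zero, mul_one,
      Complex.add_re, Complex.ofReal_re, zero_add, add_zero]
    rw [show p ^ 2 / 4 = p ^ 2 / 2 / 2 by ring, mul_one_sub_binEnt_eq]
  · exact eplRho_eq p pd ▸ hρ.isSelfAdjoint
  · exact eplSigma_eq p ▸ hσ.isSelfAdjoint

/-- Relative entropy bound for the EPL state: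
`S(ρ(p,p_d) ‖ σ_SEP(p)) = (p²/2)(1 − h(p_d))`, where `S(ρ‖σ) = tr(ρ log₂ ρ) − tr(ρ log₂ σ)`
is computed via the functional calculus (with the convention `log 0 = 0`). -/
theorem epl_relative_entropy (p pd : ℝ) (hp0 : 0 < p) (hp1 : p ≤ 1)
    (hd0 : 0 ≤ pd) (hd1 : pd ≤ 1)
    (hρ : (eplRho p pd).IsHermitian) (hσ : (eplSigma p).IsHermitian) :
    ((eplRho p pd * hρ.cfc (Real.logb 2)).trace
        - (eplRho p pd * hσ.cfc (Real.logb 2)).trace).re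
      = p ^ 2 / 2 * (1 - binEnt pd) :=
  epl_relative_entropy_general p pd hρ hσ
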